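/- arXiv:1801.00714 — 3 statements merged into one kernel-verified Lean document; each statement's English description precedes it below -/
import Mathlib

section
/- Let N be a Poisson random variable with mean ξ > 0. Then E[|N − ξ|] ≥ (1/4)·min{2ξ, ξ^{1/2}}. -/
/-!
Write `X = N - ξ`. The Stein identity `E[N f(N)] = ξ E[f(N + 1)]` gives the central moments
`E X² = ξ` and `E X⁴ = ξ + 3ξ²`. For `c ≥ 0` one has `3c²x² ≤ 2c³|x| + x⁴` pointwise, since the
difference is `|x| (|x| - c)² (|x| + 2c)`; taking expectations with `c² = 1 + 3ξ` yields
`E|X| ≥ ξ / √(1 + 3ξ)`, which is at least `√ξ / 4` once `ξ ≥ 1/13`. For smaller `ξ` the term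
`n = 0` alone contributes `ξ e^{-ξ} ≥ ξ / 2`.
-/

open Real Nat

noncomputable def poissonWeight (ξ : ℝ) (n : ℕ) : ℝ := exp (-ξ) * ξ ^ n / n !

lemma three_mul_sq_mul_sq_le {c : ℝ} (hc : 0 ≤ c) (x : ℝ) :
    3 * c ^ 2 * x ^ 2 ≤ 2 * c ^ 3 * |x| + x ^ 4 := by
  have hfactor : 0 ≤ |x| * (|x| - c) ^ 2 * (|x| + 2 * c) := by positivity
  have h2 : x ^ 2 = |x| ^ 2 := (sq_abs x).symm
  have h4 : x ^ 4 = |x| ^ 4 := (pow_abs x 4).symm ▸ (abs_of_nonneg (by positivity)).symm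
  rw [h2, h4]
  nlinarith [hfactor]

lemma three_mul_sq_mul_le_of_hasSum {ι : Type*} {w x : ι → ℝ} {A a b c : ℝ}
    (hw : ∀ i, 0 ≤ w i) (hc : 0 ≤ c) (hA : HasSum (fun i ↦ w i * |x i|) A)
    (ha : HasSum (fun i ↦ w i * x i ^ 2) a) (hb : HasSum (fun i ↦ w i * x i ^ 4) b) :
    3 * c ^ 2 * a ≤ 2 * c ^ 3 * A + b := by
  refine hasSum_le (fun i ↦ ?_) (ha.mul_left _) ((hA.mul_left _).add hb)
  have := mul_le_mul_of_nonneg_left (three_mul_sq_mul_sq_le hc (x i)) (hw i)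
  linarith

namespace poissonWeight

variable {ξ : ℝ}

lemma nonneg (hξ : 0 ≤ ξ) (n : ℕ) : 0 ≤ poissonWeight ξ n := by
  unfold poissonWeight; positivity

variable (ξ) in
lemma hasSum : HasSum (poissonWeight ξ) 1 := by
  have h := (NormedSpace.expSeries_div_hasSum_exp ξ).mul_left (exp (-ξ))
  rw [← exp_eq_exp_ℝ, ← exp_add, neg_add_cancel, exp_zero] at h
  exact h.congr_fun fun n ↦ mul_div_assoc _ _ _

lemma succ_mul (n : ℕ) : poissonWeight ξ (n + 1) * (n + 1) = ξ * poissonWeight ξ n := by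
  unfold poissonWeight
  rw [factorial_succ, pow_succ]
  push_cast
  field_simp

lemma hasSum_mul_natCast_mul {f : ℝ → ℝ} {S : ℝ}
    (hf : HasSum (fun n : ℕ ↦ poissonWeight ξ n * f (n + 1)) S) :
    HasSum (fun n : ℕ ↦ poissonWeight ξ n * (n * f n)) (ξ * S) := by
  rw [← hasSum_nat_add_iff' 1, Finset.sum_range_one, CharP.cast_eq_zero, zero_mul, mul_zero,
    sub_zero]
  refine (hf.mul_left ξ).congr_fun fun n ↦ ?_
  push_cast
  rw [← mul_assoc, succ_mul, mul_assoc]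

lemma hasSum_mul_sub_mul {f : ℝ → ℝ} {S T : ℝ}
    (hS : HasSum (fun n : ℕ ↦ poissonWeight ξ n * f (n + 1)) S)
    (hT : HasSum (fun n : ℕ ↦ poissonWeight ξ n * f n) T) :
    HasSum (fun n : ℕ ↦ poissonWeight ξ n * ((n - ξ) * f n)) (ξ * (S - T)) := by
  rw [mul_sub]
  refine ((hasSum_mul_natCast_mul hS).sub (hT.mul_left ξ)).congr_fun fun n ↦ ?_
  ring

section Moments

variable (ξ)

lemma hasSum_mul_sub : HasSum (fun n : ℕ ↦ poissonWeight ξ n * (n - ξ)) 0 := by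
  have h1 := (hasSum ξ).congr_fun fun n ↦ mul_one (poissonWeight ξ n)
  simpa using hasSum_mul_sub_mul (f := fun _ ↦ 1) h1 h1

lemma hasSum_mul_sub_sq : HasSum (fun n : ℕ ↦ poissonWeight ξ n * (n - ξ) ^ 2) ξ := by
  have hS : HasSum (fun n : ℕ ↦ poissonWeight ξ n * (n + 1 - ξ)) (0 + 1) :=
    ((hasSum_mul_sub ξ).add (hasSum ξ)).congr_fun fun n ↦ by ring
  convert hasSum_mul_sub_mul (f := fun x ↦ x - ξ) hS (hasSum_mul_sub ξ) using 1
  · ext n; ring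
  · ring

lemma hasSum_mul_sub_pow_three : HasSum (fun n : ℕ ↦ poissonWeight ξ n * (n - ξ) ^ 3) ξ := by
  have hS : HasSum (fun n : ℕ ↦ poissonWeight ξ n * (n + 1 - ξ) ^ 2) (ξ + 2 * 0 + 1) :=
    (((hasSum_mul_sub_sq ξ).add ((hasSum_mul_sub ξ).mul_left 2)).add (hasSum ξ)).congr_fun
      fun n ↦ by ring
  convert hasSum_mul_sub_mul (f := fun x ↦ (x - ξ) ^ 2) hS (hasSum_mul_sub_sq ξ) using 1
  · ext n; ring
  · ring

lemma hasSum_mul_sub_pow_four :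
    HasSum (fun n : ℕ ↦ poissonWeight ξ n * (n - ξ) ^ 4) (ξ + 3 * ξ ^ 2) := by
  have hS : HasSum (fun n : ℕ ↦ poissonWeight ξ n * (n + 1 - ξ) ^ 3) (ξ + 3 * ξ + 3 * 0 + 1) :=
    ((((hasSum_mul_sub_pow_three ξ).add ((hasSum_mul_sub_sq ξ).mul_left 3)).add
      ((hasSum_mul_sub ξ).mul_left 3)).add (hasSum ξ)).congr_fun fun n ↦ by ring
  convert hasSum_mul_sub_mul (f := fun x ↦ (x - ξ) ^ 3) hS (hasSum_mul_sub_pow_three ξ) using 1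
  · ext n; ring
  · ring

end Moments

lemma summable_mul_abs_sub (hξ : 0 ≤ ξ) :
    Summable fun n : ℕ ↦ poissonWeight ξ n * |n - ξ| := by
  refine .of_nonneg_of_le (fun n ↦ mul_nonneg (nonneg hξ n) (abs_nonneg _)) (fun n ↦ ?_)
    ((hasSum ξ).add (hasSum_mul_sub_sq ξ)).summable
  have : |(n : ℝ) - ξ| ≤ 1 + (n - ξ) ^ 2 := by
    nlinarith [sq_abs ((n : ℝ) - ξ), sq_nonneg (|(n : ℝ) - ξ| - 1)]
  simpa only [mul_add, mul_one] using mul_le_mul_of_nonneg_left this (nonneg hξ n)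

lemma mul_exp_neg_le_tsum_mul_abs_sub (hξ : 0 ≤ ξ) :
    ξ * exp (-ξ) ≤ ∑' n : ℕ, poissonWeight ξ n * |n - ξ| := by
  have h0 := (summable_mul_abs_sub hξ).le_tsum 0
    fun n _ ↦ mul_nonneg (nonneg hξ n) (abs_nonneg _)
  simpa [poissonWeight, abs_of_nonneg hξ, mul_comm] using h0

lemma div_sqrt_le_tsum_mul_abs_sub (hξ : 0 ≤ ξ) :
    ξ / √(1 + 3 * ξ) ≤ ∑' n : ℕ, poissonWeight ξ n * |n - ξ| := by
  set c := √(1 + 3 * ξ)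
  have hc : 0 < c := sqrt_pos.2 (by linarith)
  have hc2 : c ^ 2 = 1 + 3 * ξ := sq_sqrt (by linarith)
  have := three_mul_sq_mul_le_of_hasSum (nonneg hξ) hc.le
    (summable_mul_abs_sub hξ).hasSum (hasSum_mul_sub_sq ξ) (hasSum_mul_sub_pow_four ξ)
  rw [div_le_iff₀ hc]
  nlinarith

end poissonWeight

/-- For `N ~ Poisson(ξ)` with `ξ > 0`,
`E[|N − ξ|] ≥ (1/4)·min{2ξ, ξ^{1/2}}`, where the expectation is written out as the
series `∑ₙ e^{−ξ} ξⁿ/n! · |n − ξ|`. -/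
theorem poisson_abs_mean_deviation_lower_bound (ξ : ℝ) (hξ : 0 < ξ) :
    (1 / 4) * min (2 * ξ) (Real.sqrt ξ) ≤
      ∑' n : ℕ, (Real.exp (-ξ) * ξ ^ n / n.factorial) * |(n : ℝ) - ξ| := by
  change _ ≤ ∑' n : ℕ, poissonWeight ξ n * |(n : ℝ) - ξ|
  rcases le_or_gt (1 / 13) ξ with hlarge | hsmall
  · have hsqrt : √(1 + 3 * ξ) ≤ 4 * √ξ := by
      rw [show 4 * √ξ = √(16 * ξ) by rw [sqrt_mul' _ hξ.le]; norm_num]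
      exact sqrt_le_sqrt (by linarith)
    have : √ξ / 4 ≤ ξ / √(1 + 3 * ξ) := by
      rw [div_le_div_iff₀ (by norm_num) (sqrt_pos.2 (by linarith))]
      nlinarith [mul_self_sqrt hξ.le, sqrt_nonneg ξ]
    linarith [min_le_right (2 * ξ) √ξ, poissonWeight.div_sqrt_le_tsum_mul_abs_sub hξ.le]
  · have := add_one_le_exp (-ξ)
    nlinarith [min_le_left (2 * ξ) √ξ, poissonWeight.mul_exp_neg_le_tsum_mul_abs_sub hξ.le]
end

section
/- Let M be a Poisson random variable with mean μ ≥ 1. Then P[M = ⌈μ⌉] > 1/(8·⌈μ⌉^{1/2}). -/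
/-!
Write `n = ⌈μ⌉`, so that `0 ≤ n - μ < 1 ≤ μ`. Since the Stirling sequence is antitone, it is
bounded by its first term, which gives `n! ≤ e √n (n/e)^n`. On the other side,
`exp (1 - n/μ) ≤ μ/n` together with `(n - μ)² ≤ μ` gives `e^{μ-n-1} n^n ≤ μ^n`. Combining the two,
`e^{-μ} μ^n / n! ≥ e^{-2} / √n`, and `e^{-2} > 1/8`.
-/

open Real Nat

theorem factorial_le_exp_one_mul_sqrt_mul_pow {n : ℕ} (hn : n ≠ 0) :
    (n ! : ℝ) ≤ exp 1 * √n * (n / exp 1) ^ n := by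
  obtain ⟨m, rfl⟩ : ∃ m, n = m + 1 := ⟨n - 1, by omega⟩
  have h : Stirling.stirlingSeq (m + 1) ≤ exp 1 / √2 :=
    Stirling.stirlingSeq_one ▸ Stirling.stirlingSeq'_antitone (Nat.zero_le m)
  rw [Stirling.stirlingSeq, div_le_div_iff₀ (by positivity) (by positivity),
    sqrt_mul zero_le_two] at h
  exact le_of_mul_le_mul_right (by linarith) (by positivity : (0 : ℝ) < √2)

theorem exp_one_sub_div_le_div {a b : ℝ} (ha : 0 < a) (hb : 0 < b) :
    exp (1 - b / a) ≤ a / b := by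
  have h : b / a ≤ exp (b / a - 1) := by linarith [add_one_le_exp (b / a - 1)]
  calc exp (1 - b / a) = (exp (b / a - 1))⁻¹ := by rw [← exp_neg, neg_sub]
    _ ≤ (b / a)⁻¹ := inv_anti₀ (by positivity) h
    _ = a / b := inv_div b a

theorem exp_sub_sub_one_mul_pow_le_pow {μ : ℝ} {n : ℕ} (hμ : 0 < μ) (hn : n ≠ 0)
    (hsq : ((n : ℝ) - μ) ^ 2 ≤ μ) :
    exp (μ - n - 1) * (n : ℝ) ^ n ≤ μ ^ n := by
  have hn' : (0 : ℝ) < n := by positivity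
  calc exp (μ - n - 1) * (n : ℝ) ^ n
      ≤ exp (n * (1 - n / μ)) * (n : ℝ) ^ n := by
        gcongr
        rw [← sub_nonneg]
        have : n * (1 - n / μ) - (μ - n - 1) = 1 - (n - μ) ^ 2 / μ := by field_simp; ring
        rw [this, sub_nonneg, div_le_one hμ]
        exact hsq
    _ ≤ (μ / n) ^ n * (n : ℝ) ^ n := by
        rw [exp_nat_mul]
        gcongr
        exact exp_one_sub_div_le_div hμ hn'
    _ = μ ^ n := by rw [div_pow, div_mul_cancel₀ _ (by positivity)]

theorem exp_neg_two_div_sqrt_le_poisson_pmf {μ : ℝ} {n : ℕ} (hμ : 0 < μ) (hn : n ≠ 0)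
    (hsq : ((n : ℝ) - μ) ^ 2 ≤ μ) :
    exp (-2) / √n ≤ exp (-μ) * μ ^ n / n ! := by
  have hn' : (0 : ℝ) < n := by positivity
  calc exp (-2) / √n
      = exp (-μ) * (exp (μ - n - 1) * (n : ℝ) ^ n) / (exp 1 * √n * (n / exp 1) ^ n) := by
        rw [div_pow, ← exp_nat_mul, mul_one]
        field_simp
        simp only [← exp_add]
        congr 1
        ring
    _ ≤ exp (-μ) * μ ^ n / n ! := by
        gcongr
        · exact exp_sub_sub_one_mul_pow_le_pow hμ hn hsq
        · exact factorial_le_exp_one_mul_sqrt_mul_pow hn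

theorem one_div_eight_lt_exp_neg_two : 1 / 8 < exp (-2) := by
  rw [one_div, exp_neg, inv_lt_inv₀ (by norm_num) (exp_pos 2)]
  calc exp 2 = exp 1 * exp 1 := by rw [← exp_add]; norm_num
    _ < 8 := by nlinarith [exp_one_lt_d9, exp_pos 1]

/-- For `M ~ Poisson(μ)` with `μ ≥ 1`,
`P[M = ⌈μ⌉] > 1/(8·⌈μ⌉^{1/2})`, the point mass written out as `e^{−μ} μ^{⌈μ⌉}/⌈μ⌉!`. -/
theorem poisson_point_mass_at_ceil_mean_lower_bound (μ : ℝ) (hμ : 1 ≤ μ) :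
    1 / (8 * Real.sqrt (⌈μ⌉₊ : ℝ)) < Real.exp (-μ) * μ ^ ⌈μ⌉₊ / (⌈μ⌉₊).factorial := by
  set n := ⌈μ⌉₊
  have hn : n ≠ 0 := (Nat.ceil_pos.mpr (by linarith)).ne'
  have hμn : μ ≤ n := Nat.le_ceil μ
  have hnμ : (n : ℝ) < μ + 1 := Nat.ceil_lt_add_one (by linarith)
  have hsq : ((n : ℝ) - μ) ^ 2 ≤ μ := by nlinarith
  calc 1 / (8 * √n) = (1 / 8) / √n := by rw [div_mul_eq_div_div]
    _ < exp (-2) / √n := by gcongr; exact one_div_eight_lt_exp_neg_two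
    _ ≤ exp (-μ) * μ ^ n / n ! := exp_neg_two_div_sqrt_le_poisson_pmf (by linarith) hn hsq
end

section
/- Let T be a nonnegative random variable with T = f(X_1,…,X_M) satisfying the tail bound P[|T − E T| ≥ t | M = m] ≤ 2 exp(−m t²/2) for every m, and suppose M is Poisson with mean μ. Then for every t > 0, P[|T − E[T]| ≥ t] ≤ 2·exp(−μ(1 − e^{−t²/2})) ≤ 2·exp(−μ t²/(2 + t²)). -/
/-! Summing the fibrewise bounds over `M = m` gives `2 E[r^M]` with `r = exp(-t²/2)`, and the
Poisson generating function is `E[r^M] = exp(-μ(1 - r))`. The weaker bound follows from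
`exp(-x) ≤ 1/(1 + x)` at `x = t²/2`. -/

open MeasureTheory Real Nat

lemma hasSum_measureReal_inter_preimage_singleton {Ω ι : Type*} [MeasurableSpace Ω]
    [MeasurableSpace ι] [Countable ι] [MeasurableSingletonClass ι]
    (μ : Measure Ω) [IsFiniteMeasure μ] {M : Ω → ι} (hM : Measurable M) (A : Set Ω) :
    HasSum (fun i ↦ μ.real (A ∩ M ⁻¹' {i})) (μ.real A) := by
  have hsum : ∑' i, μ (A ∩ M ⁻¹' {i}) = μ A := by
    simp_rw [Set.inter_comm A, ← Measure.restrict_apply (hM (measurableSet_singleton _))]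
    rw [← measure_iUnion (pairwise_disjoint_fiber M) fun i ↦ hM (measurableSet_singleton i),
      ← Set.preimage_iUnion, Set.iUnion_of_singleton, Set.preimage_univ,
      Measure.restrict_apply_univ]
  have := ENNReal.hasSum_toReal (hsum ▸ measure_ne_top μ A)
  rwa [← ENNReal.tsum_toReal_eq fun i ↦ measure_ne_top μ _, hsum] at this

lemma hasSum_poisson_mul_pow (μ r : ℝ) :
    HasSum (fun m : ℕ ↦ exp (-μ) * μ ^ m / m ! * r ^ m) (exp (-(μ * (1 - r)))) := by
  convert! (NormedSpace.expSeries_div_hasSum_exp (μ * r)).mul_left (exp (-μ)) using 1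
  · ext m; rw [mul_pow]; ring
  · rw [← exp_eq_exp_ℝ, ← exp_add]; ring_nf

lemma div_one_add_le_one_sub_exp_neg {x : ℝ} (hx : 0 ≤ x) : x / (1 + x) ≤ 1 - exp (-x) := by
  have hexp : exp (-x) ≤ 1 / (1 + x) := by
    rw [exp_neg, one_div]
    exact inv_anti₀ (by positivity) (by linarith [add_one_le_exp x])
  have h1x : 1 / (1 + x) = 1 - x / (1 + x) := by field_simp; ring
  linarith

theorem poissonized_tail_bound_general
    {Ω : Type*} [MeasurableSpace Ω] (μP : Measure Ω) [IsProbabilityMeasure μP]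
    (M : Ω → ℕ) (hMmeas : Measurable M) (μ₀ : ℝ) (hμ₀ : 0 < μ₀)
    (hpois : ∀ m : ℕ, (μP {ω | M ω = m}).toReal
        = Real.exp (-μ₀) * μ₀ ^ m / m.factorial)
    (T : Ω → ℝ) (t : ℝ)
    (hcond : ∀ m : ℕ,
      (μP ({ω | t ≤ |T ω - ∫ ω', T ω' ∂μP|} ∩ {ω | M ω = m})).toReal
        ≤ 2 * Real.exp (-(m : ℝ) * t ^ 2 / 2) * (μP {ω | M ω = m}).toReal) :
    (μP {ω | t ≤ |T ω - ∫ ω', T ω' ∂μP|}).toReal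
        ≤ 2 * Real.exp (-(μ₀ * (1 - Real.exp (-t ^ 2 / 2))))
    ∧ 2 * Real.exp (-(μ₀ * (1 - Real.exp (-t ^ 2 / 2))))
        ≤ 2 * Real.exp (-(μ₀ * t ^ 2 / (2 + t ^ 2))) := by
  have hfiber : ∀ m : ℕ, (μP ({ω | t ≤ |T ω - ∫ ω', T ω' ∂μP|} ∩ {ω | M ω = m})).toReal
      ≤ 2 * (exp (-μ₀) * μ₀ ^ m / m ! * exp (-t ^ 2 / 2) ^ m) := fun m ↦
    (hcond m).trans_eq <| by rw [hpois, ← exp_nat_mul]; ring_nf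
  refine ⟨hasSum_le hfiber (hasSum_measureReal_inter_preimage_singleton μP hMmeas _)
    ((hasSum_poisson_mul_pow μ₀ _).mul_left 2), ?_⟩
  have hx := div_one_add_le_one_sub_exp_neg (x := t ^ 2 / 2) (by positivity)
  rw [← neg_div, show t ^ 2 / 2 / (1 + t ^ 2 / 2) = t ^ 2 / (2 + t ^ 2) by field_simp] at hx
  gcongr 2 * exp (-?_)
  rw [mul_div_assoc]
  exact mul_le_mul_of_nonneg_left hx hμ₀.le

/-- Let `M` be Poisson with mean `μ₀` and `T` a random variable
satisfying the conditional tail bound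
`P[|T − E T| ≥ t, M = m] ≤ 2·exp(−m t²/2)·P[M = m]` for every `m`. Then for every `t > 0`,
`P[|T − E T| ≥ t] ≤ 2·exp(−μ₀(1 − e^{−t²/2})) ≤ 2·exp(−μ₀ t²/(2 + t²))`. -/
theorem poissonized_tail_bound
    {Ω : Type*} [MeasurableSpace Ω] (μP : Measure Ω) [IsProbabilityMeasure μP]
    (M : Ω → ℕ) (hMmeas : Measurable M) (μ₀ : ℝ) (hμ₀ : 0 < μ₀)
    (hpois : ∀ m : ℕ, (μP {ω | M ω = m}).toReal
        = Real.exp (-μ₀) * μ₀ ^ m / m.factorial)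
    (T : Ω → ℝ) (hTmeas : Measurable T) (t : ℝ) (ht : 0 < t)
    (hcond : ∀ m : ℕ,
      (μP ({ω | t ≤ |T ω - ∫ ω', T ω' ∂μP|} ∩ {ω | M ω = m})).toReal
        ≤ 2 * Real.exp (-(m : ℝ) * t ^ 2 / 2) * (μP {ω | M ω = m}).toReal) :
    (μP {ω | t ≤ |T ω - ∫ ω', T ω' ∂μP|}).toReal
        ≤ 2 * Real.exp (-(μ₀ * (1 - Real.exp (-t ^ 2 / 2))))
    ∧ 2 * Real.exp (-(μ₀ * (1 - Real.exp (-t ^ 2 / 2))))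
        ≤ 2 * Real.exp (-(μ₀ * t ^ 2 / (2 + t ^ 2))) :=
  poissonized_tail_bound_general μP M hMmeas μ₀ hμ₀ hpois T t hcond
end
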